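/- Let n ≥ 2, 1 < p < n, θ > 1, σ with 0 ≤ 1/θ − 1/σ ≤ 1/n, p* = np/(n−p), q = 1 + ((n−p)/p)(θ/(θ−1)), and R > 0. For a radially symmetric nonnegative measurable function u on B_R, setting v(y) = u(x) under the transformation y = R(−(q−1) log_q(|x|/R))^{−1/(q−1)} x/|x|, one has ∫_{R^n} |y|^{nσ/p* − n} v(y)^σ dy = ∫_{B_R} |x|^{nσ/p* − n} u(x)^σ / [(q−1) log_q(R/|x|)]^{1 + σ(θ−1)/θ} dx. -/

import Mathlib

/-!
Write `s = ‖y‖` and `r = ‖x‖`. The transformation is radial, and its radii are related by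
`r^(1-q) = R^(1-q) + s^(1-q)`, so it maps `(0, ∞)` increasingly onto `(0, R)` with
`dr/ds = (r/s)^q`, while `(q-1) log_q(R/r) = (r/s)^(q-1)`. In polar coordinates both integrals
become one-dimensional, and after the substitution `s ↦ r` the integrands agree because the
exponents satisfy `(q-1)(1 + σ(θ-1)/θ) = (n - 1) + (nσ/p* - n) + q`.
-/

open MeasureTheory

/-- The q-logarithm `log_q r = (r^(1-q) - 1)/(1-q)`. -/
noncomputable def logq (q r : ℝ) : ℝ := (r ^ (1 - q) - 1) / (1 - q)

/-- The inverse of the transformation `x ↦ y = R(−(q−1) log_q(‖x‖/R))^{−1/(q−1)} x/‖x‖`,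
    namely `y ↦ x = R(1 + (‖y‖/R)^{1−q})^{1/(1−q)} y/‖y‖`. -/
noncomputable def invTrans (n : ℕ) (q R : ℝ) (y : EuclideanSpace ℝ (Fin n)) :
    EuclideanSpace ℝ (Fin n) :=
  (R * (1 + (‖y‖ / R) ^ (1 - q)) ^ (1 / (1 - q)) * ‖y‖⁻¹) • y

open Set Metric

noncomputable def invTransRadius (q R s : ℝ) : ℝ := (R ^ (1 - q) + s ^ (1 - q)) ^ (1 - q)⁻¹

section InvTransRadius

variable {q R s : ℝ}

theorem norm_invTrans {n : ℕ} (hq : q ≠ 1) (hR : 0 < R) {y : EuclideanSpace ℝ (Fin n)}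
    (hy : y ≠ 0) : ‖invTrans n q R y‖ = invTransRadius q R ‖y‖ := by
  have ha : 1 - q ≠ 0 := sub_ne_zero.2 hq.symm
  have hy' : 0 < ‖y‖ := norm_pos_iff.2 hy
  rw [invTrans, norm_smul, Real.norm_of_nonneg (by positivity), inv_mul_cancel_right₀ hy'.ne',
    invTransRadius, one_div]
  nth_rw 1 [← Real.rpow_rpow_inv hR.le ha]
  rw [← Real.mul_rpow (by positivity) (by positivity), Real.div_rpow hy'.le hR.le,
    mul_add, mul_one, mul_div_cancel₀ _ (by positivity)]

theorem invTransRadius_rpow (hq : q ≠ 1) (hR : 0 ≤ R) (hs : 0 ≤ s) :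
    invTransRadius q R s ^ (1 - q) = R ^ (1 - q) + s ^ (1 - q) :=
  Real.rpow_inv_rpow (by positivity) (sub_ne_zero.2 hq.symm)

theorem invTransRadius_pos (hR : 0 < R) (hs : 0 ≤ s) : 0 < invTransRadius q R s := by
  unfold invTransRadius; positivity

theorem invTransRadius_lt (hq : 1 < q) (hR : 0 < R) (hs : 0 < s) : invTransRadius q R s < R := by
  rw [← Real.rpow_lt_rpow_iff_of_neg (z := 1 - q) hR (invTransRadius_pos hR hs.le) (by linarith),
    invTransRadius_rpow hq.ne' hR.le hs.le]
  exact lt_add_of_pos_right _ (by positivity)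

theorem hasDerivAt_invTransRadius (hq : q ≠ 1) (hR : 0 < R) (hs : 0 < s) :
    HasDerivAt (invTransRadius q R) ((invTransRadius q R s / s) ^ q) s := by
  have ha : 1 - q ≠ 0 := sub_ne_zero.2 hq.symm
  have hX : HasDerivAt (fun s ↦ R ^ (1 - q) + s ^ (1 - q)) ((1 - q) * s ^ (1 - q - 1)) s :=
    (Real.hasDerivAt_rpow_const (Or.inl hs.ne')).const_add _
  refine (hX.rpow_const (p := (1 - q)⁻¹) (Or.inl (by positivity))).congr_deriv ?_
  rw [Real.div_rpow (invTransRadius_pos hR hs.le).le hs.le, invTransRadius, ← Real.rpow_mul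
    (by positivity), show (1 - q)⁻¹ * q = (1 - q)⁻¹ - 1 by field_simp; ring,
    show 1 - q - 1 = -q by ring, Real.rpow_neg hs.le]
  field_simp

theorem injOn_invTransRadius (hq : q ≠ 1) (hR : 0 ≤ R) : InjOn (invTransRadius q R) (Ioi 0) := by
  intro s₁ hs₁ s₂ hs₂ h
  have h' := congrArg (· ^ (1 - q)) h
  simp only [invTransRadius_rpow hq hR (le_of_lt hs₁), invTransRadius_rpow hq hR (le_of_lt hs₂),
    add_right_inj] at h'
  exact Real.rpow_left_injOn (sub_ne_zero.2 hq.symm) (mem_Ioi.1 hs₁).le (mem_Ioi.1 hs₂).le h'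

theorem image_invTransRadius_Ioi (hq : 1 < q) (hR : 0 < R) :
    invTransRadius q R '' Ioi 0 = Ioo 0 R := by
  refine Subset.antisymm ?_ fun r ⟨hr₀, hrR⟩ ↦ ?_
  · rintro _ ⟨s, hs, rfl⟩
    exact ⟨invTransRadius_pos hR (le_of_lt hs), invTransRadius_lt hq hR hs⟩
  · have hlt : R ^ (1 - q) < r ^ (1 - q) := Real.rpow_lt_rpow_of_neg hr₀ hrR (by linarith)
    refine ⟨(r ^ (1 - q) - R ^ (1 - q)) ^ (1 - q)⁻¹, Real.rpow_pos_of_pos (by linarith) _, ?_⟩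
    rw [invTransRadius, Real.rpow_inv_rpow (by linarith) (by linarith), add_sub_cancel,
      Real.rpow_rpow_inv hr₀.le (by linarith)]

theorem mul_logq_div_invTransRadius (hq : q ≠ 1) (hR : 0 < R) (hs : 0 < s) :
    (q - 1) * logq q (R / invTransRadius q R s) = (invTransRadius q R s / s) ^ (q - 1) := by
  have hρ := invTransRadius_pos (q := q) hR hs.le
  have hρa := invTransRadius_rpow hq hR.le hs.le
  have ha : 1 - q ≠ 0 := sub_ne_zero.2 hq.symm
  rw [logq, show q - 1 = -(1 - q) by ring, Real.rpow_neg (by positivity), Real.div_rpow hR.le hρ.le,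
    Real.div_rpow hρ.le hs.le, hρa]
  have : 0 < R ^ (1 - q) + s ^ (1 - q) := by positivity
  field_simp
  ring

theorem jacobian_mul_weight_invTransRadius {β d : ℝ} (hq : q ≠ 1) (hR : 0 < R) (hs : 0 < s)
    (hβ : (q - 1) * β = d + q) :
    (invTransRadius q R s / s) ^ q *
      (invTransRadius q R s ^ d / ((q - 1) * logq q (R / invTransRadius q R s)) ^ β) = s ^ d := by
  have hρ := invTransRadius_pos (q := q) hR hs.le
  rw [mul_logq_div_invTransRadius hq hR hs, ← Real.rpow_mul (by positivity), hβ,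
    Real.rpow_add (by positivity), Real.div_rpow hρ.le hs.le d]
  field_simp

end InvTransRadius

section RadialIntegrals

variable {E F : Type*} [NormedAddCommGroup E] [NormedSpace ℝ E] [Nontrivial E]
  [FiniteDimensional ℝ E] [MeasurableSpace E] [BorelSpace E]
  [NormedAddCommGroup F] [NormedSpace ℝ F] (μ : Measure E) [μ.IsAddHaarMeasure]

theorem setIntegral_ball_fun_norm_addHaar (f : ℝ → F) (R : ℝ) :
    ∫ x in ball (0 : E) R, f ‖x‖ ∂μ = Module.finrank ℝ E • μ.real (ball 0 1) •
      ∫ r in Ioo 0 R, r ^ (Module.finrank ℝ E - 1) • f r := by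
  have hindicator (x : E) : (ball 0 R).indicator (fun x ↦ f ‖x‖) x = (Iio R).indicator f ‖x‖ := by
    by_cases h : ‖x‖ < R <;> simp [h]
  rw [← integral_indicator measurableSet_ball]
  simp_rw [hindicator]
  rw [integral_fun_norm_addHaar μ, ← Ioi_inter_Iio, ← setIntegral_indicator measurableSet_Iio]
  simp_rw [indicator_smul_apply]

theorem integral_fun_norm_eq_setIntegral_ball (f g : ℝ → F) {ρ ρ' : ℝ → ℝ} {R : ℝ}
    (hρ : ∀ s ∈ Ioi 0, HasDerivWithinAt ρ (ρ' s) (Ioi 0) s) (hρ_inj : InjOn ρ (Ioi 0))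
    (hρ_image : ρ '' Ioi 0 = Ioo 0 R)
    (hfg : ∀ s ∈ Ioi (0 : ℝ), s ^ (Module.finrank ℝ E - 1) • f s
      = |ρ' s| • ρ s ^ (Module.finrank ℝ E - 1) • g (ρ s)) :
    ∫ y, f ‖y‖ ∂μ = ∫ x in ball (0 : E) R, g ‖x‖ ∂μ := by
  rw [integral_fun_norm_addHaar μ, setIntegral_ball_fun_norm_addHaar, ← hρ_image,
    integral_image_eq_integral_abs_deriv_smul measurableSet_Ioi hρ hρ_inj,
    setIntegral_congr_fun measurableSet_Ioi hfg]

theorem integral_norm_rpow_mul_comp_invTransRadius (W : ℝ → ℝ) {q R α β : ℝ} (hq : 1 < q)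
    (hR : 0 < R) (hβ : (q - 1) * β = ((Module.finrank ℝ E : ℝ) - 1 + α) + q) :
    ∫ y, ‖y‖ ^ α * W (invTransRadius q R ‖y‖) ∂μ
      = ∫ x in ball (0 : E) R, ‖x‖ ^ α * W ‖x‖ / ((q - 1) * logq q (R / ‖x‖)) ^ β ∂μ := by
  have hpow (t : ℝ) (ht : 0 < t) :
      t ^ (Module.finrank ℝ E - 1) * t ^ α = t ^ ((Module.finrank ℝ E : ℝ) - 1 + α) := by
    rw [Real.rpow_add ht, ← Real.rpow_natCast, Nat.cast_sub Module.finrank_pos, Nat.cast_one]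
  refine integral_fun_norm_eq_setIntegral_ball μ (fun s ↦ s ^ α * W (invTransRadius q R s))
    (fun r ↦ r ^ α * W r / ((q - 1) * logq q (R / r)) ^ β)
    (fun s hs ↦ (hasDerivAt_invTransRadius hq.ne' hR hs).hasDerivWithinAt)
    (injOn_invTransRadius hq.ne' hR.le) (image_invTransRadius_Ioi hq hR) fun s hs ↦ ?_
  have hρ := invTransRadius_pos (q := q) hR (le_of_lt hs)
  rw [smul_eq_mul, smul_eq_mul, smul_eq_mul, abs_of_pos (Real.rpow_pos_of_pos (div_pos hρ hs) q),
    ← mul_assoc, hpow s hs, ← jacobian_mul_weight_invTransRadius hq.ne' hR hs hβ, ← hpow _ hρ]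
  ring

end RadialIntegrals

theorem stmt_14_general (n : ℕ) (p θ σ R pstar q : ℝ) (hp1 : 1 < p) (hpn : p < n)
    (hθ : 1 < θ) (hR : 0 < R) (hpstar : pstar = (n : ℝ) * p / ((n : ℝ) - p))
    (hq : q = 1 + (((n : ℝ) - p) / p) * (θ / (θ - 1)))
    (u : EuclideanSpace ℝ (Fin n) → ℝ)
    (hrad : ∀ x y : EuclideanSpace ℝ (Fin n), ‖x‖ = ‖y‖ → u x = u y)
    (v : EuclideanSpace ℝ (Fin n) → ℝ)
    (hv : ∀ y : EuclideanSpace ℝ (Fin n), y ≠ 0 → v y = u (invTrans n q R y)) :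
    ∫ y : EuclideanSpace ℝ (Fin n), ‖y‖ ^ ((n : ℝ) * σ / pstar - n) * v y ^ σ
      = ∫ x in Metric.ball (0 : EuclideanSpace ℝ (Fin n)) R,
          ‖x‖ ^ ((n : ℝ) * σ / pstar - n) * u x ^ σ
            / ((q - 1) * logq q (R / ‖x‖)) ^ (1 + σ * (θ - 1) / θ) := by
  set α := (n : ℝ) * σ / pstar - n
  set β := 1 + σ * (θ - 1) / θ
  have : Nonempty (Fin n) := ⟨⟨0, Nat.cast_pos.1 (by linarith : (0 : ℝ) < n)⟩⟩
  have hq1 : 1 < q := by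
    rw [hq, lt_add_iff_pos_right]
    exact mul_pos (div_pos (by linarith) (by linarith)) (div_pos (by linarith) (by linarith))
  have hβ : (q - 1) * β = ((n : ℝ) - 1 + α) + q := by
    have : (n : ℝ) ≠ 0 := by linarith
    have : (n : ℝ) - p ≠ 0 := by linarith
    have : θ - 1 ≠ 0 := by linarith
    simp only [α, β, hq, hpstar]
    field_simp
    ring
  obtain ⟨U, hU⟩ : ∃ U : ℝ → ℝ, ∀ x, u x = U ‖x‖ :=
    ⟨Function.extend norm u 0, fun x ↦
      (Function.FactorsThrough.extend_apply (f := norm) (g := u) (fun _ _ ↦ hrad _ _) 0 x).symm⟩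
  have hv' : ∀ᵐ y ∂(volume : Measure (EuclideanSpace ℝ (Fin n))),
      ‖y‖ ^ α * v y ^ σ = ‖y‖ ^ α * U (invTransRadius q R ‖y‖) ^ σ := by
    filter_upwards [compl_mem_ae_iff.2 (measure_singleton 0)] with y hy
    rw [hv y hy, hU, norm_invTrans hq1.ne' hR hy]
  calc ∫ y, ‖y‖ ^ α * v y ^ σ = ∫ y, ‖y‖ ^ α * U (invTransRadius q R ‖y‖) ^ σ :=
        integral_congr_ae hv'
    _ = ∫ x in ball (0 : EuclideanSpace ℝ (Fin n)) R,
          ‖x‖ ^ α * U ‖x‖ ^ σ / ((q - 1) * logq q (R / ‖x‖)) ^ β :=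
        integral_norm_rpow_mul_comp_invTransRadius volume (fun r ↦ U r ^ σ) hq1 hR
          (by rwa [finrank_euclideanSpace_fin])
    _ = _ := by simp_rw [hU]

/-- Change of variables for the weighted `σ`-norm: with
    `q = 1 + ((n−p)/p)(θ/(θ−1))`, `p* = np/(n−p)`, `v(y) = u(x)` under
    `y = R(−(q−1)log_q(‖x‖/R))^{−1/(q−1)} x/‖x‖`, for radial nonnegative measurable `u`:
    `∫_{ℝⁿ} ‖y‖^{nσ/p*−n} v(y)^σ dy
      = ∫_{B_R} ‖x‖^{nσ/p*−n} u(x)^σ/[(q−1)log_q(R/‖x‖)]^{1+σ(θ−1)/θ} dx`. -/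
theorem stmt_14 (n : ℕ) (hn : 2 ≤ n) (p θ σ R pstar q : ℝ) (hp1 : 1 < p) (hpn : p < n)
    (hθ : 1 < θ) (hσ0 : 0 ≤ 1 / θ - 1 / σ) (hσn : 1 / θ - 1 / σ ≤ 1 / (n : ℝ))
    (hR : 0 < R) (hpstar : pstar = (n : ℝ) * p / ((n : ℝ) - p))
    (hq : q = 1 + (((n : ℝ) - p) / p) * (θ / (θ - 1)))
    (u : EuclideanSpace ℝ (Fin n) → ℝ) (hmeas : Measurable u) (hpos : ∀ x, 0 ≤ u x)
    (hrad : ∀ x y : EuclideanSpace ℝ (Fin n), ‖x‖ = ‖y‖ → u x = u y)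
    (v : EuclideanSpace ℝ (Fin n) → ℝ)
    (hv : ∀ y : EuclideanSpace ℝ (Fin n), y ≠ 0 → v y = u (invTrans n q R y)) :
    ∫ y : EuclideanSpace ℝ (Fin n), ‖y‖ ^ ((n : ℝ) * σ / pstar - n) * v y ^ σ
      = ∫ x in Metric.ball (0 : EuclideanSpace ℝ (Fin n)) R,
          ‖x‖ ^ ((n : ℝ) * σ / pstar - n) * u x ^ σ
            / ((q - 1) * logq q (R / ‖x‖)) ^ (1 + σ * (θ - 1) / θ) :=
  stmt_14_general n p θ σ R pstar q hp1 hpn hθ hR hpstar hq u hrad v hv
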